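/- arXiv:2311.02067 — 3 statements merged into one kernel-verified Lean document; each statement's English description precedes it below -/
import Mathlib

section
/- Let N = {1, …, n} be a set of agents where each agent i has an interval approval set S_i = {ℓ_i, ℓ_i+1, …, r_i} with 1 ≤ ℓ_i ≤ r_i ≤ n. If a subset N' ⊆ N of agents admits a wonderful partition, then N' admits an earliest-due-date wonderful partition. -/
/-!
Among the wonderful partitions take one minimising `∑ k, w k * |π(k)|`, where the weight `w` is
strictly decreasing along `≺`. If agents `i ≺ j` violated the earliest-due-date condition, i.e.
`ℓ i ≤ |π(j)| < |π(i)|`, exchange `i` and `j` between their coalitions: `i` lands in a coalition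
of size in `[ℓ i, |π(i)|) ⊆ [ℓ i, r i]`, and `j` in one of size in `(|π(j)|, r i] ⊆ [ℓ j, r j]`
since `r i ≤ r j`. So the new partition is wonderful, and its potential is smaller by
`(w i - w j) * (|π(i)| - |π(j)|) > 0`, a contradiction.
-/

open Finset

def Equiv.finsetOrderIso {α β : Type*} (e : α ≃ β) : Finset α ≃o Finset β :=
  ⟨e.finsetCongr, by simp⟩

section SwapSum

variable {α M : Type*} [DecidableEq α] [AddCommMonoid M] {s : Finset α} {i j : α}

lemma Finset.map_swap_eq_self (hi : i ∈ s) (hj : j ∈ s) :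
    s.map (Equiv.swap i j).toEmbedding = s := by
  ext k
  rw [mem_map_equiv, Equiv.symm_swap, Equiv.swap_apply_def]
  split_ifs with hki hkj <;> simp_all

lemma Finset.sum_swap_add (hi : i ∈ s) (hj : j ∈ s) (hij : i ≠ j) (g : α → α → M) :
    ∑ k ∈ s, g (Equiv.swap i j k) k + (g i i + g j j) =
      ∑ k ∈ s, g k k + (g j i + g i j) := by
  have hsub : {i, j} ⊆ s := insert_subset hi (singleton_subset_iff.2 hj)
  rw [← sum_sdiff hsub, ← sum_sdiff hsub (f := fun k => g k k), sum_pair hij, sum_pair hij,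
    Equiv.swap_apply_left, Equiv.swap_apply_right, sum_congr rfl fun k hk => ?_]
  · abel
  · simp only [mem_sdiff, mem_insert, mem_singleton, not_or] at hk
    rw [Equiv.swap_apply_of_ne_of_ne hk.2.1 hk.2.2]

end SwapSum

lemma Finset.exists_nat_weight_lt_of_lt {α β : Type*} [Preorder β] (s : Finset α) (key : α → β) :
    ∃ w : α → ℕ, ∀ i, ∀ j ∈ s, key i < key j → w j < w i := by
  classical
  refine ⟨fun k => #{m ∈ s | key k < key m}, fun i j hj hij => card_lt_card ?_⟩
  refine (ssubset_iff_of_subset fun m hm => ?_).2 ⟨j, ?_, ?_⟩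
  · rw [mem_filter] at hm ⊢
    exact ⟨hm.1, hij.trans hm.2⟩
  · exact mem_filter.2 ⟨hj, hij⟩
  · simp

namespace Finpartition

variable {α : Type*} [DecidableEq α] {s : Finset α}

def permute (π : Finpartition s) (σ : Equiv.Perm α) (hσ : s.map σ.toEmbedding = s) :
    Finpartition s :=
  (π.map σ.finsetOrderIso).copy hσ

lemma card_part_permute (π : Finpartition s) {σ : Equiv.Perm α} (hσ : s.map σ.toEmbedding = s)
    {k : α} (hk : k ∈ s) :
    #((π.permute σ hσ).part k) = #(π.part (σ.symm k)) := by
  have hk' : σ.symm k ∈ s := by rwa [← mem_map_equiv, hσ]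
  have hmem : (π.part (σ.symm k)).map σ.toEmbedding ∈ (π.permute σ hσ).parts :=
    mem_map_of_mem _ (π.part_mem.2 hk')
  rw [(π.permute σ hσ).part_eq_of_mem hmem (by simpa using π.mem_part_self.2 hk'), card_map]

variable (ℓ r : α → ℕ)

def IsWonderful (π : Finpartition s) : Prop :=
  ∀ k ∈ s, #(π.part k) ∈ Icc (ℓ k) (r k)

/-- The order `≺` on agents is `i ≺ j ↔ key i < key j`; the paper's order is
`key i = toLex (r i, i)`. -/
def IsEarliestDueDate {β : Type*} [LT β] (key : α → β) (π : Finpartition s) : Prop :=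
  ∀ i ∈ s, ∀ j ∈ s, key i < key j → ¬(ℓ i ≤ #(π.part j) ∧ #(π.part j) < #(π.part i))

def sizePotential (w : α → ℕ) (π : Finpartition s) : ℕ :=
  ∑ k ∈ s, w k * #(π.part k)

variable {ℓ r} {π : Finpartition s}

lemma isWonderful_iff_forall_mem_parts :
    π.IsWonderful ℓ r ↔ ∀ B ∈ π.parts, ∀ i ∈ B, #B ∈ Icc (ℓ i) (r i) := by
  refine ⟨fun hπ B hB i hi => ?_, fun hπ k hk => hπ _ (π.part_mem.2 hk) k (π.mem_part_self.2 hk)⟩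
  rw [← π.part_eq_of_mem hB hi]
  exact hπ i (π.le hB hi)

lemma sizePotential_permute (w : α → ℕ) {σ : Equiv.Perm α} (hσ : s.map σ.toEmbedding = s) :
    sizePotential w (π.permute σ hσ) = ∑ k ∈ s, w (σ k) * #(π.part k) := by
  refine sum_equiv σ.symm (fun k => ?_) (fun k hk => ?_)
  · rw [← mem_map_equiv, hσ]
  · rw [card_part_permute π hσ hk, Equiv.apply_symm_apply]

variable {i j : α}

lemma IsWonderful.swap (hπ : π.IsWonderful ℓ r) (hi : i ∈ s) (hj : j ∈ s) (hr : r i ≤ r j)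
    (hℓ : ℓ i ≤ #(π.part j)) (hlt : #(π.part j) < #(π.part i)) :
    (π.permute (Equiv.swap i j) (map_swap_eq_self hi hj)).IsWonderful ℓ r := by
  intro k hk
  have hπi := mem_Icc.1 (hπ i hi)
  have hπj := mem_Icc.1 (hπ j hj)
  rw [card_part_permute π _ hk, Equiv.symm_swap, mem_Icc]
  rcases eq_or_ne k i with rfl | hki
  · rw [Equiv.swap_apply_left]; omega
  rcases eq_or_ne k j with rfl | hkj
  · rw [Equiv.swap_apply_right]; omega
  · rw [Equiv.swap_apply_of_ne_of_ne hki hkj]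
    exact mem_Icc.1 (hπ k hk)

lemma sizePotential_swap_lt {w : α → ℕ} (hi : i ∈ s) (hj : j ∈ s) (hw : w j < w i)
    (hlt : #(π.part j) < #(π.part i)) :
    sizePotential w (π.permute (Equiv.swap i j) (map_swap_eq_self hi hj)) < sizePotential w π := by
  have hij : i ≠ j := by rintro rfl; exact hlt.false
  have := sum_swap_add hi hj hij fun a b => w a * #(π.part b)
  rw [sizePotential_permute]
  unfold sizePotential
  nlinarith

theorem exists_isWonderful_isEarliestDueDate {β : Type*} [Preorder β] (key : α → β)
    (hkey : ∀ i j, key i < key j → r i ≤ r j) (h : ∃ π : Finpartition s, π.IsWonderful ℓ r) :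
    ∃ π : Finpartition s, π.IsWonderful ℓ r ∧ π.IsEarliestDueDate ℓ key := by
  obtain ⟨w, hw⟩ := s.exists_nat_weight_lt_of_lt key
  obtain ⟨π, hπ, hmin⟩ := (measure (sizePotential w)).wf.has_min {π | π.IsWonderful ℓ r} h
  refine ⟨π, hπ, fun i hi j hj hij ⟨hℓ, hlt⟩ => hmin _ (hπ.swap hi hj (hkey i j hij) hℓ hlt) ?_⟩
  exact sizePotential_swap_lt hi hj (hw i j hj hij) hlt

end Finpartition

theorem earliest_due_date_exists_general (n : ℕ) (ℓ r : Fin n → ℕ)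
    (N' : Finset (Fin n))
    (h : ∃ π : Finpartition N',
      ∀ B ∈ π.parts, ∀ i ∈ B, B.card ∈ Finset.Icc (ℓ i) (r i)) :
    ∃ π : Finpartition N',
      (∀ B ∈ π.parts, ∀ i ∈ B, B.card ∈ Finset.Icc (ℓ i) (r i)) ∧
      (∀ i j : Fin n, (r i < r j ∨ (r i = r j ∧ i < j)) →
        ∀ B ∈ π.parts, i ∈ B → ∀ B' ∈ π.parts, j ∈ B' →
          ¬(ℓ i ≤ B'.card ∧ B'.card < B.card)) := by
  have hkey (i j : Fin n) (hij : toLex (r i, i) < toLex (r j, j)) : r i ≤ r j :=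
    (Prod.Lex.toLex_lt_toLex.1 hij).elim le_of_lt fun h => h.1.le
  obtain ⟨π, hπ, hedd⟩ := Finpartition.exists_isWonderful_isEarliestDueDate _ hkey
    (h.imp fun _ => Finpartition.isWonderful_iff_forall_mem_parts.2)
  refine ⟨π, Finpartition.isWonderful_iff_forall_mem_parts.1 hπ, ?_⟩
  intro i j hij B hB hiB B' hB' hjB'
  rw [← π.part_eq_of_mem hB hiB, ← π.part_eq_of_mem hB' hjB']
  exact hedd i (π.le hB hiB) j (π.le hB' hjB') (Prod.Lex.toLex_lt_toLex.2 hij)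

/-- If a subset `N'` of agents with interval approval sets
`S i = {ℓ i, …, r i}` admits a wonderful partition, then it admits an
earliest-due-date wonderful partition (with respect to the order
`i ≺ j ↔ r i < r j ∨ (r i = r j ∧ i < j)`). -/
theorem earliest_due_date_exists (n : ℕ) (ℓ r : Fin n → ℕ)
    (hℓ : ∀ i, 1 ≤ ℓ i) (hlr : ∀ i, ℓ i ≤ r i) (hr : ∀ i, r i ≤ n)
    (N' : Finset (Fin n))
    (h : ∃ π : Finpartition N',
      ∀ B ∈ π.parts, ∀ i ∈ B, B.card ∈ Finset.Icc (ℓ i) (r i)) :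
    ∃ π : Finpartition N',
      (∀ B ∈ π.parts, ∀ i ∈ B, B.card ∈ Finset.Icc (ℓ i) (r i)) ∧
      (∀ i j : Fin n, (r i < r j ∨ (r i = r j ∧ i < j)) →
        ∀ B ∈ π.parts, i ∈ B → ∀ B' ∈ π.parts, j ∈ B' →
          ¬(ℓ i ≤ B'.card ∧ B'.card < B.card)) :=
  earliest_due_date_exists_general n ℓ r N' h
end

section
/- Let cost : ℕ × ℕ → ℝ be monotone and fulfil both the quadrangle inequality and the reverse quadrangle inequality. Then for all natural numbers x ≤ y and b ≤ a one has cost(x, a) + cost(y, b) ≥ cost(x, b) + cost(y, a). (This is the swap inequality underlying part (a) of the size-monotonicity lemma: exchanging the coalitions of two participating agents with ideal sizes x ≤ y placed in groups of sizes a > b does not increase the utilitarian social cost.) -/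
/-- utilitarian swap inequality: if `cost` is monotone and
fulfills the quadrangle and reverse quadrangle inequalities, then for ideal
sizes `x ≤ y` and group sizes `b ≤ a`,
`cost x a + cost y b ≥ cost x b + cost y a`. -/
theorem utilitarian_swap_inequality (cost : ℕ → ℕ → ℝ)
    (hmono : ∀ p s s' : ℕ, (p ≤ s ∧ s ≤ s') ∨ (s' ≤ s ∧ s ≤ p) →
      cost p s ≤ cost p s')
    (hquad : ∀ a b c d : ℕ, a ≤ b → b ≤ c → c ≤ d →
      cost a c + cost b d ≤ cost a d + cost b c)
    (hrquad : ∀ a b c d : ℕ, d ≤ c → c ≤ b → b ≤ a →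
      cost a c + cost b d ≤ cost a d + cost b c)
    (x y b a : ℕ) (hxy : x ≤ y) (hba : b ≤ a) :
    cost x b + cost y a ≤ cost x a + cost y b := by
  rcases le_total a x with hax | hxa
  · -- b ≤ a ≤ x ≤ y : reverse quadrangle
    have := hrquad y x a b hba hax hxy
    linarith
  · rcases le_total y b with hyb | hby
    · -- x ≤ y ≤ b ≤ a : quadrangle
      have := hquad x y b a hxy hyb hba
      linarith
    · rcases le_total b x with hbx | hxb
      · rcases le_total y a with hya | hay
        · -- b ≤ x ≤ y ≤ a : combine both quadrangles with monotonicity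
          have h1 := hquad x y y a hxy le_rfl hya
          have h2 := hrquad y x x b hbx le_rfl hxy
          have h3 : cost x x ≤ cost x y := hmono x x y (Or.inl ⟨le_rfl, hxy⟩)
          have h4 : cost y y ≤ cost y x := hmono y y x (Or.inr ⟨hxy, le_rfl⟩)
          linarith
        · -- b ≤ x ≤ a ≤ y : reverse quadrangle + monotonicity
          have h2 := hrquad y x x b hbx le_rfl hxy
          have h3 : cost x x ≤ cost x a := hmono x x a (Or.inl ⟨le_rfl, hxa⟩)
          have h4 : cost y a ≤ cost y x := hmono y a x (Or.inr ⟨hxa, hay⟩)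
          linarith
      · rcases le_total y a with hya | hay
        · -- x ≤ b ≤ y ≤ a : quadrangle + monotonicity
          have h1 := hquad x y y a hxy le_rfl hya
          have h3 : cost x b ≤ cost x y := hmono x b y (Or.inl ⟨hxb, hby⟩)
          have h4 : cost y y ≤ cost y b := hmono y y b (Or.inr ⟨hby, le_rfl⟩)
          linarith
        · -- x ≤ b ≤ a ≤ y : pure monotonicity
          have h3 : cost x b ≤ cost x a := hmono x b a (Or.inl ⟨hxb, hba⟩)
          have h4 : cost y a ≤ cost y b := hmono y a b (Or.inr ⟨hba, hay⟩)
          linarith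
end

section
/- For every real exponent k ≥ 1, the cost function cost(a, b) = |b − a|^k on the reals satisfies the quadrangle inequality and the reverse quadrangle inequality; in particular, for all reals a ≤ b ≤ c ≤ d it holds that (c − a)^k + (d − b)^k ≤ (d − a)^k + (c − b)^k. -/
/-!
Each inequality reads `f w + f z ≤ f x + f y` for the convex function `f t = |t| ^ k`, where
`x ≤ w ≤ y` and `w + z = x + y`: the two differences on the left lie between those on the right
and have the same sum. Writing `w = a x + b y` with `a + b = 1` forces `z = b x + a y`, and adding
Jensen's inequality at both points gives the claim.
-/

open Set

theorem ConvexOn.map_add_map_le_of_add_eq {𝕜 β : Type*} [Field 𝕜] [LinearOrder 𝕜]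
    [IsStrictOrderedRing 𝕜] [AddCommGroup β] [PartialOrder β] [IsOrderedAddMonoid β]
    [Module 𝕜 β] {s : Set 𝕜} {f : 𝕜 → β} (hf : ConvexOn 𝕜 s f) {x y w z : 𝕜}
    (hx : x ∈ s) (hy : y ∈ s) (hxw : x ≤ w) (hwy : w ≤ y) (hsum : w + z = x + y) :
    f w + f z ≤ f x + f y := by
  obtain ⟨a, b, ha, hb, hab, rfl⟩ : w ∈ segment 𝕜 x y := by
    rw [segment_eq_Icc (hxw.trans hwy)]
    exact ⟨hxw, hwy⟩
  have hz : z = b • x + a • y := by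
    simp only [smul_eq_mul] at hsum ⊢
    linear_combination hsum - (x + y) * hab
  calc f (a • x + b • y) + f z
      ≤ (a • f x + b • f y) + (b • f x + a • f y) := by
        rw [hz]
        exact add_le_add (hf.2 hx hy ha hb hab) (hf.2 hx hy hb ha (by rw [add_comm, hab]))
    _ = f x + f y := by
        rw [add_add_add_comm, ← add_smul, add_comm (b • f y), ← add_smul, hab, one_smul, one_smul]

theorem convexOn_abs_rpow {p : ℝ} (hp : 1 ≤ p) : ConvexOn ℝ univ fun x : ℝ ↦ |x| ^ p := by
  refine ⟨convex_univ, fun x _ y _ a b ha hb hab ↦ ?_⟩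
  simp only [smul_eq_mul]
  calc |a * x + b * y| ^ p ≤ (a * |x| + b * |y|) ^ p := by
        gcongr
        calc |a * x + b * y| ≤ |a * x| + |b * y| := abs_add_le _ _
          _ = a * |x| + b * |y| := by rw [abs_mul, abs_mul, abs_of_nonneg ha, abs_of_nonneg hb]
    _ ≤ a * |x| ^ p + b * |y| ^ p :=
        (convexOn_rpow hp).2 (abs_nonneg x) (abs_nonneg y) ha hb hab

/-- for every real exponent `k ≥ 1`, the cost function
`cost a b = |b − a| ^ k` on the reals satisfies the quadrangle inequality and
the reverse quadrangle inequality; in particular, for all reals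
`a ≤ b ≤ c ≤ d` one has `(c − a)^k + (d − b)^k ≤ (d − a)^k + (c − b)^k`. -/
theorem abs_rpow_quadrangle (k : ℝ) (hk : 1 ≤ k) :
    (∀ a b c d : ℝ, a ≤ b → b ≤ c → c ≤ d →
      |c - a| ^ k + |d - b| ^ k ≤ |d - a| ^ k + |c - b| ^ k) ∧
    (∀ a b c d : ℝ, d ≤ c → c ≤ b → b ≤ a →
      |c - a| ^ k + |d - b| ^ k ≤ |d - a| ^ k + |c - b| ^ k) ∧
    (∀ a b c d : ℝ, a ≤ b → b ≤ c → c ≤ d →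
      (c - a) ^ k + (d - b) ^ k ≤ (d - a) ^ k + (c - b) ^ k) := by
  have habs := convexOn_abs_rpow hk
  refine ⟨fun a b c d hab hbc hcd ↦ ?_, fun a b c d hdc hcb hba ↦ ?_,
    fun a b c d hab hbc hcd ↦ ?_⟩
  · refine (habs.map_add_map_le_of_add_eq trivial trivial ?_ ?_ ?_).trans_eq (add_comm _ _) <;>
      linarith
  · exact habs.map_add_map_le_of_add_eq trivial trivial (by linarith) (by linarith) (by ring)
  · refine ((convexOn_rpow hk).map_add_map_le_of_add_eq (mem_Ici.2 ?_) (mem_Ici.2 ?_) ?_ ?_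
      ?_).trans_eq (add_comm _ _) <;> linarith
end
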